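/- Group-balanced accuracy lower bound (sLA proposition): under the factorized model f(x)_{y,z} = exp(h(x,y))·C(z,x) with C > 0 and unique maximizers, the multi-label group-balanced accuracy (1/(K·L)) Σ_{y,z} P_{x|y,z}((y,z) = argmax f(x)) is at most the group-balanced accuracy of the classifier x ↦ argmax_y h(x,y), namely (1/(K·L)) Σ_{y,z} P_{x|y,z}(y = argmax_{y'} h(x,y')). -/
import Mathlib


/-- Group-balanced accuracy lower bound (sLA proposition): under the factorized model
`f(x)_{y,z} = exp(h(x,y))·C(z,x)` with `C > 0` and unique maximizers, the multi-label
group-balanced accuracy is at most the group-balanced accuracy of `x ↦ argmax_y h(x,y)`. -/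
theorem stmt_14 {X Y Z : Type*} [Fintype X] [Fintype Y] [Fintype Z]
    (P : Y → Z → X → ℝ) (hP0 : ∀ y z x, 0 ≤ P y z x) (hP1 : ∀ y z, ∑ x : X, P y z x = 1)
    (h : X → Y → ℝ) (C : Z → X → ℝ) (hC : ∀ z x, 0 < C z x)
    (huniqY : ∀ x, ∃! y : Y, ∀ y', h x y' ≤ h x y)
    (huniqZ : ∀ x, ∃! z : Z, ∀ z', C z' x ≤ C z x) :
    (1 / ((Fintype.card Y : ℝ) * (Fintype.card Z : ℝ))) *
        ∑ y : Y, ∑ z : Z, ∑ x : X, P y z x *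
          (if ∀ (y' : Y) (z' : Z), Real.exp (h x y') * C z' x ≤ Real.exp (h x y) * C z x
            then 1 else 0) ≤
      (1 / ((Fintype.card Y : ℝ) * (Fintype.card Z : ℝ))) *
        ∑ y : Y, ∑ z : Z, ∑ x : X, P y z x *
          (if ∀ y' : Y, h x y' ≤ h x y then 1 else 0) := by
  apply mul_le_mul_of_nonneg_left _ (by positivity)
  refine Finset.sum_le_sum fun y _ => Finset.sum_le_sum fun z _ => Finset.sum_le_sum fun x _ => ?_
  apply mul_le_mul_of_nonneg_left _ (hP0 y z x)
  by_cases hc : ∀ (y' : Y) (z' : Z), Real.exp (h x y') * C z' x ≤ Real.exp (h x y) * C z x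
  · rw [if_pos hc, if_pos]
    intro y'
    have := hc y' z
    have h2 : Real.exp (h x y') ≤ Real.exp (h x y) :=
      le_of_mul_le_mul_right this (hC z x)
    exact (Real.exp_le_exp).mp h2
  · rw [if_neg hc]
    positivity
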